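/- arXiv:2303.07782 — 2 statements merged into one kernel-verified Lean document; each statement's English description precedes it below -/
import Mathlib

section
/- Free-lunch privacy as a PML constraint under product priors: For every ε ≥ 0, the mechanism p satisfies ε-free-lunch privacy if and only if for every full-support product prior q on 𝒟^n, every x ∈ 𝒟^n, and every y ∈ 𝒴: p(x)(y) ≤ e^ε · Σ_{x'∈𝒟^n} p(x')(y) · q(x'). (The displayed inequality is the pointwise-maximal-leakage constraint ℓ(X → y) ≤ ε.) -/
open Finset

/-- A probability mass function on a finite type. -/
def IsPMF {α : Type*} [Fintype α] (p : α → ℝ) : Prop :=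
  (∀ a, 0 ≤ p a) ∧ ∑ a, p a = 1

/-- A mechanism on databases: a conditional pmf from `𝒟^n` to `𝒴`. -/
def IsMechanism {𝒟 𝒴 : Type*} [Fintype 𝒴] {n : ℕ}
    (p : (Fin n → 𝒟) → 𝒴 → ℝ) : Prop :=
  ∀ x, (∀ y, 0 ≤ p x y) ∧ ∑ y, p x y = 1

/-- `ε`-differential privacy. -/
def DiffPrivate {𝒟 𝒴 : Type*} {n : ℕ} (p : (Fin n → 𝒟) → 𝒴 → ℝ) (ε : ℝ) : Prop :=
  ∀ (x : Fin n → 𝒟) (i : Fin n) (d' : 𝒟) (y : 𝒴),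
    p x y ≤ Real.exp ε * p (Function.update x i d') y

/-- `ε`-free-lunch privacy. -/
def FreeLunch {𝒟 𝒴 : Type*} {n : ℕ} (p : (Fin n → 𝒟) → 𝒴 → ℝ) (ε : ℝ) : Prop :=
  ∀ (x x' : Fin n → 𝒟) (y : 𝒴), p x y ≤ Real.exp ε * p x' y

/-!
If `p x y ≤ e^ε p x' y` for every `x'`, averaging over `x'` against any prior gives the PML
bound. Conversely, the point mass at `x'` is the limit as `t → 0` of the full-support product
priors `∏ⱼ ((1 - t) δ_{x'ⱼ} + t · uniform)`, and the right-hand side of the PML bound is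
continuous in `t`, so the bounds for these priors pass to the limit `p x y ≤ e^ε p x' y`.
-/

open Filter Topology

theorem IsPMF.le_mul_sum_mul {β : Type*} [Fintype β] {w g : β → ℝ} {a c : ℝ}
    (hw : IsPMF w) (h : ∀ b, a ≤ c * g b) : a ≤ c * ∑ b, g b * w b :=
  calc a = ∑ b, a * w b := by rw [← mul_sum, hw.2, mul_one]
    _ ≤ ∑ b, c * (g b * w b) := by
        refine sum_le_sum fun b _ => ?_
        rw [← mul_assoc]
        exact mul_le_mul_of_nonneg_right (h b) (hw.1 b)
    _ = c * ∑ b, g b * w b := by rw [mul_sum]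

section ProductPrior

variable {ι α : Type*} [Fintype ι] [DecidableEq ι] [Fintype α]

theorem isPMF_pi {q : ι → α → ℝ} (hq : ∀ i, IsPMF (q i)) :
    IsPMF fun x : ι → α => ∏ i, q i (x i) := by
  refine ⟨fun x => prod_nonneg fun i _ => (hq i).1 (x i), ?_⟩
  rw [← Fintype.prod_sum]
  exact prod_eq_one fun i _ => (hq i).2

variable [DecidableEq α]

theorem sum_mul_prod_ite_eq (g : (ι → α) → ℝ) (x₀ : ι → α) :
    ∑ x : ι → α, g x * ∏ i, (if x i = x₀ i then 1 else 0 : ℝ) = g x₀ := by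
  simp only [Fintype.prod_ite_zero, prod_const_one, ← funext_iff, mul_ite, mul_one, mul_zero,
    sum_ite_eq', mem_univ, if_true]

noncomputable def mixUniform (a : α) (t : ℝ) (d : α) : ℝ :=
  (1 - t) * (if d = a then 1 else 0) + t / Fintype.card α

theorem mixUniform_zero (a : α) : mixUniform a 0 = fun d => if d = a then 1 else 0 := by
  ext d
  simp [mixUniform]

theorem mixUniform_pos (a d : α) {t : ℝ} (ht₀ : 0 < t) (ht₁ : t ≤ 1) : 0 < mixUniform a t d := by
  have : 0 < Fintype.card α := Fintype.card_pos_iff.mpr ⟨a⟩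
  unfold mixUniform
  have : 0 ≤ 1 - t := sub_nonneg.mpr ht₁
  positivity

theorem isPMF_mixUniform (a : α) {t : ℝ} (ht₀ : 0 < t) (ht₁ : t ≤ 1) :
    IsPMF (mixUniform a t) := by
  refine ⟨fun d => (mixUniform_pos a d ht₀ ht₁).le, ?_⟩
  have : (Fintype.card α : ℝ) ≠ 0 := by
    exact_mod_cast (Fintype.card_pos_iff.mpr ⟨a⟩).ne'
  simp only [mixUniform, sum_add_distrib, ← mul_sum, sum_ite_eq', mem_univ, if_true, sum_const,
    card_univ, nsmul_eq_mul]
  field_simp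
  ring

theorem tendsto_sum_mul_prod_mixUniform (g : (ι → α) → ℝ) (x₀ : ι → α) :
    Tendsto (fun t => ∑ x : ι → α, g x * ∏ i, mixUniform (x₀ i) t (x i)) (𝓝 0) (𝓝 (g x₀)) := by
  have hcont : Continuous fun t => ∑ x : ι → α, g x * ∏ i, mixUniform (x₀ i) t (x i) := by
    unfold mixUniform
    fun_prop
  simpa [mixUniform_zero, sum_mul_prod_ite_eq] using hcont.tendsto 0

end ProductPrior

theorem le_mul_of_forall_le_mul_sum_pi {ι α : Type*} [Fintype ι] [DecidableEq ι] [Fintype α]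
    {g : (ι → α) → ℝ} {a c : ℝ} (x₀ : ι → α)
    (h : ∀ q : ι → α → ℝ, (∀ i, IsPMF (q i)) → (∀ i d, 0 < q i d) →
      a ≤ c * ∑ x : ι → α, g x * ∏ i, q i (x i)) :
    a ≤ c * g x₀ := by
  classical
  refine ge_of_tendsto (((tendsto_sum_mul_prod_mixUniform g x₀).const_mul c).mono_left
    (nhdsWithin_le_nhds (s := Set.Ioi 0))) ?_
  filter_upwards [Ioc_mem_nhdsGT (zero_lt_one' ℝ)] with t ⟨ht₀, ht₁⟩
  exact h _ (fun i => isPMF_mixUniform (x₀ i) ht₀ ht₁) fun i d => mixUniform_pos (x₀ i) d ht₀ ht₁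

theorem free_lunch_iff_pml_product_priors_general
    {𝒟 𝒴 : Type*} [Fintype 𝒟]
    {n : ℕ}
    (p : (Fin n → 𝒟) → 𝒴 → ℝ)
    (ε : ℝ) :
    FreeLunch p ε ↔
      ∀ qi : Fin n → 𝒟 → ℝ, (∀ i, IsPMF (qi i)) → (∀ i d, 0 < qi i d) →
        ∀ (x : Fin n → 𝒟) (y : 𝒴),
          p x y ≤ Real.exp ε * ∑ x' : Fin n → 𝒟, p x' y * ∏ j, qi j (x' j) := by
  constructor
  · intro h qi hq _ x y
    exact (isPMF_pi hq).le_mul_sum_mul (h x · y)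
  · intro h x x' y
    exact le_mul_of_forall_le_mul_sum_pi x' fun qi hq hpos => h qi hq hpos x y

/-- **Free-lunch privacy as a PML constraint under product priors.** The mechanism `p`
satisfies `ε`-free-lunch privacy iff for every full-support product prior
`q(x) = Π_j q_j(x_j)`, every database `x`, and every outcome `y`,
`p(x)(y) ≤ e^ε · Σ_{x'} p(x')(y) · q(x')`, i.e. the PML constraint `ℓ(X → y) ≤ ε`. -/
theorem free_lunch_iff_pml_product_priors
    {𝒟 𝒴 : Type*} [Fintype 𝒟] [Fintype 𝒴] [Nonempty 𝒴]
    (hD : 2 ≤ Fintype.card 𝒟) {n : ℕ} (hn : 1 ≤ n)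
    (p : (Fin n → 𝒟) → 𝒴 → ℝ) (hp : IsMechanism p)
    (ε : ℝ) (hε : 0 ≤ ε) :
    FreeLunch p ε ↔
      ∀ qi : Fin n → 𝒟 → ℝ, (∀ i, IsPMF (qi i)) → (∀ i d, 0 < qi i d) →
        ∀ (x : Fin n → 𝒟) (y : 𝒴),
          p x y ≤ Real.exp ε * ∑ x' : Fin n → 𝒟, p x' y * ∏ j, qi j (x' j) :=
  free_lunch_iff_pml_product_priors_general p ε
end

section
/- Leakage capacity as the worst-case PML over all priors: For any mechanism P_{Y|X} between finite sets, the supremum over all full-support priors q on 𝒳 of the supremum over all y with q_Y(y) > 0 of ℓ_q(X→y) equals the leakage capacity C(P_{Y|X}), as an identity in [0, +∞]. -/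
open Finset

/-- Maximum value of a function on a finite nonempty type. -/
noncomputable def maxVal {α : Type*} [Fintype α] [Nonempty α] (p : α → ℝ) : ℝ :=
  Finset.univ.sup' Finset.univ_nonempty p

/-- Minimum value of a function on a finite nonempty type. -/
noncomputable def minVal {α : Type*} [Fintype α] [Nonempty α] (p : α → ℝ) : ℝ :=
  Finset.univ.inf' Finset.univ_nonempty p

/-- Min-entropy `H_∞(p) = -log (max_a p a)`. -/
noncomputable def minEntropy {α : Type*} [Fintype α] [Nonempty α] (p : α → ℝ) : ℝ :=
  - Real.log (maxVal p)

/-- Output marginal `q_Y(y) = ∑ x, p_{Y|X=x}(y) q(x)`. -/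
noncomputable def outMarginal {𝒳 𝒴 : Type*} [Fintype 𝒳] (P : 𝒳 → 𝒴 → ℝ)
    (q : 𝒳 → ℝ) (y : 𝒴) : ℝ :=
  ∑ x, P x y * q x

/-- Posterior on `𝒳` given outcome `y`. -/
noncomputable def posteriorX {𝒳 𝒴 : Type*} [Fintype 𝒳] (P : 𝒳 → 𝒴 → ℝ)
    (q : 𝒳 → ℝ) (y : 𝒴) (x : 𝒳) : ℝ :=
  P x y * q x / outMarginal P q y

/-- Prior of the attribute `U` induced by the kernel `PU` and the prior `q`. -/
noncomputable def attrPrior {𝒳 𝒰 : Type*} [Fintype 𝒳] (PU : 𝒳 → 𝒰 → ℝ)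
    (q : 𝒳 → ℝ) (u : 𝒰) : ℝ :=
  ∑ x, PU x u * q x

/-- Posterior of the attribute `U` given outcome `y`. -/
noncomputable def posteriorU {𝒳 𝒴 𝒰 : Type*} [Fintype 𝒳] (P : 𝒳 → 𝒴 → ℝ)
    (PU : 𝒳 → 𝒰 → ℝ) (q : 𝒳 → ℝ) (y : 𝒴) (u : 𝒰) : ℝ :=
  ∑ x, PU x u * posteriorX P q y x

/-- Pointwise maximal leakage `ℓ_q(X → y) = log (max_x p_{Y|X=x}(y) / q_Y(y))`. -/
noncomputable def pml {𝒳 𝒴 : Type*} [Fintype 𝒳] [Nonempty 𝒳] (P : 𝒳 → 𝒴 → ℝ)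
    (q : 𝒳 → ℝ) (y : 𝒴) : ℝ :=
  Real.log (maxVal (fun x => P x y) / outMarginal P q y)

/-- The mechanism `P` discloses the attribute `U` (given by `PU`) to the prior `q`:
there is an outcome `y` with positive marginal whose posterior on `U` has zero min-entropy. -/
def Discloses {𝒳 𝒴 𝒰 : Type*} [Fintype 𝒳] [Fintype 𝒰] [Nonempty 𝒰]
    (P : 𝒳 → 𝒴 → ℝ) (PU : 𝒳 → 𝒰 → ℝ) (q : 𝒳 → ℝ) : Prop :=
  ∃ y, 0 < outMarginal P q y ∧ minEntropy (posteriorU P PU q y) = 0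

/-- The mechanism `P` satisfies `(ε, q)`-PML. -/
def SatisfiesPML {𝒳 𝒴 : Type*} [Fintype 𝒳] [Nonempty 𝒳] (P : 𝒳 → 𝒴 → ℝ)
    (q : 𝒳 → ℝ) (ε : ℝ) : Prop :=
  ∀ y, 0 < outMarginal P q y → pml P q y ≤ ε

/-
For a fixed outcome `y` the output marginal `q_Y(y)` is an average of the likelihoods
`p_{Y|X=x}(y)`, so it lies between their minimum and maximum; this bounds every `ℓ_q(X → y)` by
the largest log-likelihood ratio. Conversely, mixing a point mass at `x'` with a small amount of
the uniform prior gives full-support priors whose marginal at `y` tends to `p_{Y|X=x'}(y)`, so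
`ℓ_q(X → y)` comes arbitrarily close to `log (p_{Y|X=x}(y) / p_{Y|X=x'}(y))`, and exceeds every
bound when `p_{Y|X=x'}(y) = 0 < p_{Y|X=x}(y)`.
-/

open Filter Topology

theorem EReal.le_of_forall_coe_lt {a b : EReal} (h : ∀ r : ℝ, (r : EReal) < a → (r : EReal) < b) :
    a ≤ b :=
  le_of_forall_lt fun _ hc =>
    let ⟨r, hcr, hra⟩ := EReal.lt_iff_exists_real_btwn.1 hc
    hcr.trans (h r hra)

section PMF

variable {α : Type*} [Fintype α]

theorem le_maxVal [Nonempty α] (p : α → ℝ) (a : α) : p a ≤ maxVal p :=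
  Finset.le_sup' p (Finset.mem_univ a)

theorem exists_maxVal_eq [Nonempty α] (p : α → ℝ) : ∃ a, maxVal p = p a := by
  obtain ⟨a, -, ha⟩ := Finset.exists_mem_eq_sup' Finset.univ_nonempty p
  exact ⟨a, ha⟩

theorem minVal_le [Nonempty α] (p : α → ℝ) (a : α) : minVal p ≤ p a :=
  Finset.inf'_le p (Finset.mem_univ a)

theorem exists_minVal_eq [Nonempty α] (p : α → ℝ) : ∃ a, minVal p = p a := by
  obtain ⟨a, -, ha⟩ := Finset.exists_mem_eq_inf' Finset.univ_nonempty p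
  exact ⟨a, ha⟩

theorem IsPMF.sum_mul_le_maxVal [Nonempty α] {q : α → ℝ} (hq : IsPMF q) (p : α → ℝ) :
    ∑ a, p a * q a ≤ maxVal p := by
  calc ∑ a, p a * q a ≤ ∑ a, maxVal p * q a :=
        Finset.sum_le_sum fun a _ => mul_le_mul_of_nonneg_right (le_maxVal p a) (hq.1 a)
    _ = maxVal p := by rw [← Finset.mul_sum, hq.2, mul_one]

theorem IsPMF.minVal_le_sum_mul [Nonempty α] {q : α → ℝ} (hq : IsPMF q) (p : α → ℝ) :
    minVal p ≤ ∑ a, p a * q a := by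
  calc minVal p = ∑ a, minVal p * q a := by rw [← Finset.mul_sum, hq.2, mul_one]
    _ ≤ ∑ a, p a * q a :=
        Finset.sum_le_sum fun a _ => mul_le_mul_of_nonneg_right (minVal_le p a) (hq.1 a)

theorem isPMF_uniform [Nonempty α] : IsPMF fun _ : α => (Fintype.card α : ℝ)⁻¹ := by
  refine ⟨fun _ => by positivity, ?_⟩
  simp [Finset.card_univ]

theorem isPMF_pointMass [DecidableEq α] (a : α) : IsPMF fun b => if b = a then (1 : ℝ) else 0 :=
  ⟨fun _ => ite_nonneg zero_le_one le_rfl, by simp⟩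

theorem IsPMF.mix {p r : α → ℝ} (hp : IsPMF p) (hr : IsPMF r) {ε : ℝ} (hε₀ : 0 ≤ ε)
    (hε₁ : ε ≤ 1) : IsPMF fun a => (1 - ε) * p a + ε * r a := by
  refine ⟨fun a => add_nonneg (mul_nonneg (by linarith) (hp.1 a)) (mul_nonneg hε₀ (hr.1 a)), ?_⟩
  rw [Finset.sum_add_distrib, ← Finset.mul_sum, ← Finset.mul_sum, hp.2, hr.2]
  ring

end PMF

section LogLikelihoodRatio

variable {𝒳 𝒴 : Type*} (P : 𝒳 → 𝒴 → ℝ)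

/-- `⊤` when only the denominator vanishes; when the numerator vanishes the junk value
`Real.log 0 = 0` makes it `0`. -/
noncomputable def logLikelihoodRatio (y : 𝒴) (x x' : 𝒳) : EReal :=
  if P x' y = 0 ∧ 0 < P x y then ⊤ else ((Real.log (P x y / P x' y) : ℝ) : EReal)

variable {P}

theorem logLikelihoodRatio_of_eq_zero_of_pos {y : 𝒴} {x x' : 𝒳} (hx' : P x' y = 0)
    (hx : 0 < P x y) : logLikelihoodRatio P y x x' = ⊤ :=
  if_pos ⟨hx', hx⟩

theorem logLikelihoodRatio_of_ne_zero {y : 𝒴} {x x' : 𝒳} (hx' : P x' y ≠ 0) :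
    logLikelihoodRatio P y x x' = ((Real.log (P x y / P x' y) : ℝ) : EReal) :=
  if_neg fun h => hx' h.1

theorem logLikelihoodRatio_of_eq_zero {y : 𝒴} {x x' : 𝒳} (hx : P x y = 0) :
    logLikelihoodRatio P y x x' = 0 := by
  simp [logLikelihoodRatio, hx]

theorem exp_mul_lt_of_lt_logLikelihoodRatio {y : 𝒴} {x x' : 𝒳} (hx' : 0 ≤ P x' y)
    (hx : 0 < P x y) {c : ℝ} (hc : (c : EReal) < logLikelihoodRatio P y x x') :
    Real.exp c * P x' y < P x y := by
  rcases hx'.eq_or_lt with hzero | hpos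
  · rwa [← hzero, mul_zero]
  · rw [logLikelihoodRatio_of_ne_zero hpos.ne', EReal.coe_lt_coe_iff,
      Real.lt_log_iff_exp_lt (div_pos hx hpos), lt_div_iff₀ hpos] at hc
    exact hc

end LogLikelihoodRatio

section Mechanism

variable {𝒳 𝒴 : Type*} [Fintype 𝒳] (P : 𝒳 → 𝒴 → ℝ)

theorem outMarginal_mix (p r : 𝒳 → ℝ) (ε : ℝ) (y : 𝒴) :
    outMarginal P (fun x => (1 - ε) * p x + ε * r x) y =
      (1 - ε) * outMarginal P p y + ε * outMarginal P r y := by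
  simp only [outMarginal, mul_add, Finset.sum_add_distrib, Finset.mul_sum]
  congr 1 <;> exact Finset.sum_congr rfl fun _ _ => by ring

theorem outMarginal_pointMass [DecidableEq 𝒳] (x' : 𝒳) (y : 𝒴) :
    outMarginal P (fun x => if x = x' then 1 else 0) y = P x' y := by
  simp [outMarginal]

theorem outMarginal_pos {q : 𝒳 → ℝ} (hP : ∀ x y, 0 ≤ P x y) (hq : ∀ x, 0 < q x) {x : 𝒳}
    {y : 𝒴} (hx : 0 < P x y) : 0 < outMarginal P q y :=
  (mul_pos hx (hq x)).trans_le <|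
    Finset.single_le_sum (fun z _ => mul_nonneg (hP z y) (hq z).le) (Finset.mem_univ x)

theorem exists_fullSupport_outMarginal_lt [Nonempty 𝒳] (x' : 𝒳) (y : 𝒴) {t : ℝ}
    (ht : P x' y < t) : ∃ q : 𝒳 → ℝ, (IsPMF q ∧ ∀ x, 0 < q x) ∧ outMarginal P q y < t := by
  classical
  set u : 𝒳 → ℝ := fun _ => (Fintype.card 𝒳 : ℝ)⁻¹
  set q : ℝ → 𝒳 → ℝ := fun ε x => (1 - ε) * (if x = x' then 1 else 0) + ε * u x
  have hq : ∀ ε, outMarginal P (q ε) y = P x' y + ε * (outMarginal P u y - P x' y) := by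
    intro ε
    rw [outMarginal_mix, outMarginal_pointMass]
    ring
  have hlim : Tendsto (fun ε => outMarginal P (q ε) y) (𝓝[>] 0) (𝓝 (P x' y)) := by
    have hcont : Continuous fun ε => P x' y + ε * (outMarginal P u y - P x' y) := by fun_prop
    simpa only [hq] using tendsto_nhdsWithin_of_tendsto_nhds (hcont.tendsto' 0 _ (by simp))
  obtain ⟨ε, hεt, hε₀, hε₁⟩ :=
    ((hlim.eventually (gt_mem_nhds ht)).and (Ioo_mem_nhdsGT one_pos)).exists
  refine ⟨q ε, ⟨(isPMF_pointMass x').mix isPMF_uniform hε₀.le hε₁.le, fun x => ?_⟩, hεt⟩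
  have hpoint : 0 ≤ (1 - ε) * (if x = x' then 1 else 0) :=
    mul_nonneg (by linarith) (ite_nonneg zero_le_one le_rfl)
  exact add_pos_of_nonneg_of_pos hpoint (by positivity)

theorem pml_le_log_maxVal_div_minVal [Nonempty 𝒳] {q : 𝒳 → ℝ} (hq : IsPMF q) {y : 𝒴}
    (hmin : 0 < minVal fun x => P x y) :
    pml P q y ≤ Real.log (maxVal (fun x => P x y) / minVal fun x => P x y) := by
  have hlow : minVal (fun x => P x y) ≤ outMarginal P q y := hq.minVal_le_sum_mul _
  have hmax : minVal (fun x => P x y) ≤ maxVal fun x => P x y :=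
    hlow.trans (hq.sum_mul_le_maxVal _)
  apply Real.log_le_log (div_pos (hmin.trans_le hmax) (hmin.trans_le hlow))
  exact div_le_div_of_nonneg_left (hmin.le.trans hmax) hmin hlow

noncomputable def leakageCapacity : EReal :=
  ⨆ (y : 𝒴) (x : 𝒳) (x' : 𝒳), logLikelihoodRatio P y x x'

noncomputable def worstCasePML [Nonempty 𝒳] : EReal :=
  ⨆ q : {q : 𝒳 → ℝ // IsPMF q ∧ ∀ x, 0 < q x},
    ⨆ y : {y : 𝒴 // 0 < outMarginal P q.1 y}, ((pml P q.1 y.1 : ℝ) : EReal)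

variable {P}

theorem pml_le_leakageCapacity [Nonempty 𝒳] (hP : ∀ x y, 0 ≤ P x y) {q : 𝒳 → ℝ}
    (hq : IsPMF q) {y : 𝒴} (hy : 0 < outMarginal P q y) :
    ((pml P q y : ℝ) : EReal) ≤ leakageCapacity P := by
  obtain ⟨xM, hxM⟩ := exists_maxVal_eq fun x => P x y
  obtain ⟨xm, hxm⟩ := exists_minVal_eq fun x => P x y
  refine le_iSup_of_le y (le_iSup₂_of_le xM xm ?_)
  by_cases hzero : P xm y = 0
  · have hmax : 0 < P xM y := hxM ▸ hy.trans_le (hq.sum_mul_le_maxVal _)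
    rw [logLikelihoodRatio_of_eq_zero_of_pos hzero hmax]
    exact le_top
  · rw [logLikelihoodRatio_of_ne_zero hzero, EReal.coe_le_coe_iff, ← hxM, ← hxm]
    exact pml_le_log_maxVal_div_minVal P hq (hxm ▸ (hP xm y).lt_of_ne' hzero)

theorem worstCasePML_le_leakageCapacity [Nonempty 𝒳] (hP : ∀ x y, 0 ≤ P x y) :
    worstCasePML P ≤ leakageCapacity P :=
  iSup_le fun q => iSup_le fun y => pml_le_leakageCapacity hP q.2.1 y.2

theorem lt_worstCasePML [Nonempty 𝒳] (hP : ∀ x y, 0 ≤ P x y) {y : 𝒴} {x x' : 𝒳}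
    (hx : 0 < P x y) {c : ℝ} (hc : Real.exp c * P x' y < P x y) :
    (c : EReal) < worstCasePML P := by
  obtain ⟨q, hq, hqy⟩ :=
    exists_fullSupport_outMarginal_lt P x' y (t := P x y / Real.exp c)
      (by rwa [lt_div_iff₀ (Real.exp_pos c), mul_comm])
  have hy : 0 < outMarginal P q y := outMarginal_pos P hP hq.2 hx
  have hpml : c < pml P q y := by
    rw [pml, Real.lt_log_iff_exp_lt (div_pos (hx.trans_le (le_maxVal (fun z => P z y) x)) hy),
      lt_div_iff₀ hy]
    calc Real.exp c * outMarginal P q y < P x y := by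
          rwa [lt_div_iff₀ (Real.exp_pos c), mul_comm] at hqy
      _ ≤ maxVal fun z => P z y := le_maxVal (fun z => P z y) x
  exact (EReal.coe_lt_coe_iff.2 hpml).trans_le (le_iSup₂_of_le ⟨q, hq⟩ ⟨y, hy⟩ le_rfl)

theorem leakageCapacity_le_worstCasePML [Fintype 𝒴] [Nonempty 𝒳] (hP : ∀ x, IsPMF (P x)) :
    leakageCapacity P ≤ worstCasePML P := by
  have hP₀ : ∀ x y, 0 ≤ P x y := fun x => (hP x).1
  have hpos : ∀ {y x x'}, 0 < P x y → logLikelihoodRatio P y x x' ≤ worstCasePML P :=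
    fun hx => EReal.le_of_forall_coe_lt fun _ hc =>
      lt_worstCasePML hP₀ hx (exp_mul_lt_of_lt_logLikelihoodRatio (hP₀ _ _) hx hc)
  have hnonneg : 0 ≤ worstCasePML P := by
    obtain ⟨x₀⟩ := ‹Nonempty 𝒳›
    obtain ⟨y₀, -, hy₀⟩ : ∃ y ∈ Finset.univ, (0 : ℝ) < P x₀ y :=
      Finset.exists_lt_of_sum_lt (by simp [(hP x₀).2])
    simpa [logLikelihoodRatio_of_ne_zero hy₀.ne', div_self hy₀.ne'] using
      hpos (x' := x₀) hy₀
  refine iSup_le fun y => iSup₂_le fun x x' => ?_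
  rcases (hP₀ x y).eq_or_lt with hzero | hx
  · rw [logLikelihoodRatio_of_eq_zero hzero.symm]
    exact hnonneg
  · exact hpos hx

end Mechanism

open scoped Classical in
theorem leakage_capacity_eq_worst_case_pml_general
    {𝒳 𝒴 : Type*} [Fintype 𝒳] [Fintype 𝒴] [Nonempty 𝒳]
    (P : 𝒳 → 𝒴 → ℝ) (hP : ∀ x, IsPMF (P x)) :
    (⨆ q : {q : 𝒳 → ℝ // IsPMF q ∧ ∀ x, 0 < q x},
      ⨆ y : {y : 𝒴 // 0 < outMarginal P q.1 y},
        ((pml P q.1 y.1 : ℝ) : EReal)) =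
    ⨆ (y : 𝒴) (x : 𝒳) (x' : 𝒳),
      (if P x' y = 0 ∧ 0 < P x y then (⊤ : EReal)
       else ((Real.log (P x y / P x' y) : ℝ) : EReal)) :=
  le_antisymm (worstCasePML_le_leakageCapacity fun x => (hP x).1)
    (leakageCapacity_le_worstCasePML hP)

open scoped Classical in
theorem leakage_capacity_eq_worst_case_pml
    {𝒳 𝒴 : Type*} [Fintype 𝒳] [Fintype 𝒴] [Nonempty 𝒳] [Nonempty 𝒴]
    (P : 𝒳 → 𝒴 → ℝ) (hP : ∀ x, IsPMF (P x)) :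
    (⨆ q : {q : 𝒳 → ℝ // IsPMF q ∧ ∀ x, 0 < q x},
      ⨆ y : {y : 𝒴 // 0 < outMarginal P q.1 y},
        ((pml P q.1 y.1 : ℝ) : EReal)) =
    ⨆ (y : 𝒴) (x : 𝒳) (x' : 𝒳),
      (if P x' y = 0 ∧ 0 < P x y then (⊤ : EReal)
       else ((Real.log (P x y / P x' y) : ℝ) : EReal)) :=
  leakage_capacity_eq_worst_case_pml_general P hP
end
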